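/- Let n, m, p ∈ ℕ with p ≤ n and p ≤ m, and let s = (s_x,s_y), t = (t_x,t_y) be distinct vertices of the n×m grid graph G_{n×m} with s_x + s_y ≤ p − 3. For each i with s_x ≤ i ≤ p − 3 − s_y define cut_i := {{(i,y),(i+1,y)} : 0 ≤ y ≤ p−3−i} ∪ {{(x,p−3−i),(x,p−2−i)} : 0 ≤ x ≤ i}. Suppose that for every such i we have t_x > i or t_y > p − 3 − i (i.e., t lies outside each of the corresponding rectangles). Then: (i) each cut_i is a set of exactly p − 1 edges of G_{n×m}; (ii) every s-t path in G_{n×m} contains an edge of each cut_i; (iii) the sets cut_i are pairwise disjoint, and there are p − 2 − (s_x + s_y) of them; and consequently (iv) every family of p s-t paths in G_{n×m} has at least p − 2 − (s_x + s_y) shared edges. -/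

import Mathlib

/-- The `n × m` grid graph: vertices are pairs `(x, y)` of naturals with `x < n`
and `y < m`, and two vertices are adjacent iff they are at Manhattan distance 1. -/
def gridGraph (n m : ℕ) : SimpleGraph (ℕ × ℕ) where
  Adj u v := u.1 < n ∧ u.2 < m ∧ v.1 < n ∧ v.2 < m ∧
    ((u.1 : ℤ) - v.1).natAbs + ((u.2 : ℤ) - v.2).natAbs = 1
  symm := by
    constructor
    rintro u v ⟨h1, h2, h3, h4, h5⟩
    exact ⟨h3, h4, h1, h2, by omega⟩
  loopless := by
    constructor
    rintro u ⟨-, -, -, -, h⟩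
    omega

/-- The set of shared edges of a family of `s`-`t` walks (an edge is shared if it
occurs in two walks with distinct indices). -/
def sharedEdges {V : Type*} {G : SimpleGraph V} {s t : V} {p : ℕ}
    (P : Fin p → G.Walk s t) : Set (Sym2 V) :=
  {e | ∃ i j, i ≠ j ∧ e ∈ (P i).edges ∧ e ∈ (P j).edges}

/-- `cutI p i = {{(i,y),(i+1,y)} : 0 ≤ y ≤ p−3−i} ∪ {{(x,p−3−i),(x,p−2−i)} : 0 ≤ x ≤ i}`. -/
def cutI (p i : ℕ) : Finset (Sym2 (ℕ × ℕ)) :=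
  ((Finset.range (p - 2 - i)).image fun y => Sym2.mk ((i, y) : ℕ × ℕ) (i + 1, y)) ∪
  ((Finset.range (i + 1)).image fun x =>
    Sym2.mk ((x, p - 3 - i) : ℕ × ℕ) (x, p - 2 - i))


/-! The cut `cutI p i` is the edge boundary of the rectangle `[0, i] × [0, p - 3 - i]` of the
grid, so every path from `s` (inside each rectangle) to `t` (outside) crosses it. The cuts are
pairwise disjoint and have `p - 1` edges each, so by pigeonhole `p` paths share an edge in
every one of the `p - 2 - (s.1 + s.2)` cuts. -/

open SimpleGraph

lemma cutI_card {p i : ℕ} (hi : i + 2 ≤ p) : (cutI p i).card = p - 1 := by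
  rw [cutI, Finset.card_union_of_disjoint, Finset.card_image_of_injective, Finset.card_range,
    Finset.card_image_of_injective, Finset.card_range]
  · omega
  all_goals first
    | intro a b hab
      simp only [Sym2.eq_iff, Prod.ext_iff] at hab
      omega
    | simp only [Finset.disjoint_left, Finset.mem_image, Finset.mem_range]
      rintro _ ⟨y, -, rfl⟩ ⟨x, -, h⟩
      simp only [Sym2.eq_iff, Prod.ext_iff] at h
      omega

lemma cutI_disjoint {p i j : ℕ} (hi : i + 3 ≤ p) (hj : j + 3 ≤ p) (hij : i ≠ j) :
    Disjoint (cutI p i) (cutI p j) := by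
  simp only [Finset.disjoint_left, cutI, Finset.mem_union, Finset.mem_image, Finset.mem_range]
  rintro _ (⟨y, -, rfl⟩ | ⟨x, -, rfl⟩) (⟨y', -, h⟩ | ⟨x', -, h⟩) <;>
  · simp only [Sym2.eq_iff, Prod.ext_iff] at h
    omega

lemma cutI_subset_edgeSet {n m p i : ℕ} (hpn : p ≤ n) (hpm : p ≤ m) (hi : i + 3 ≤ p) :
    ↑(cutI p i) ⊆ (gridGraph n m).edgeSet := by
  simp only [Set.subset_def, Finset.mem_coe, cutI, Finset.mem_union, Finset.mem_image,
    Finset.mem_range]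
  rintro _ (⟨y, hy, rfl⟩ | ⟨x, hx, rfl⟩) <;>
  · simp only [mem_edgeSet, gridGraph]
    omega

lemma gridGraph_adj_iff {n m : ℕ} {a b : ℕ × ℕ} :
    (gridGraph n m).Adj a b ↔ a.1 < n ∧ a.2 < m ∧ b.1 < n ∧ b.2 < m ∧
      ((b.1 = a.1 + 1 ∨ a.1 = b.1 + 1) ∧ b.2 = a.2 ∨
        (b.2 = a.2 + 1 ∨ a.2 = b.2 + 1) ∧ b.1 = a.1) := by
  simp only [gridGraph]
  omega

lemma mem_cutI_of_adj {n m p i : ℕ} (hi : i + 3 ≤ p) {a b : ℕ × ℕ} (hab : (gridGraph n m).Adj a b)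
    (ha : a ≤ (i, p - 3 - i)) (hb : ¬ b ≤ (i, p - 3 - i)) : s(a, b) ∈ cutI p i := by
  obtain ⟨a1, a2⟩ := a
  obtain ⟨b1, b2⟩ := b
  simp only [gridGraph_adj_iff, Prod.mk_le_mk, not_and_or, not_le] at hab ha hb
  simp only [cutI, Finset.mem_union, Finset.mem_image, Finset.mem_range]
  rcases hab.2.2.2.2 with ⟨_ | _, rfl⟩ | ⟨_ | _, rfl⟩
  · exact Or.inl ⟨b2, by omega, by rw [show a1 = i by omega, show b1 = i + 1 by omega]⟩
  · omega
  · exact Or.inr ⟨b1, by omega, by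
      rw [show a2 = p - 3 - i by omega, show b2 = p - 2 - i by omega]⟩
  · omega

lemma exists_mem_cutI_mem_edges {n m p i : ℕ} (hi : i + 3 ≤ p) {u v : ℕ × ℕ}
    (W : (gridGraph n m).Walk u v) (hu : u ≤ (i, p - 3 - i)) (hv : ¬ v ≤ (i, p - 3 - i)) :
    ∃ e ∈ cutI p i, e ∈ W.edges := by
  obtain ⟨d, hd, hd₁, hd₂⟩ := W.exists_boundary_dart (Set.Iic (i, p - 3 - i)) hu hv
  exact ⟨d.edge, mem_cutI_of_adj hi d.adj hd₁ hd₂, List.mem_map_of_mem hd⟩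

lemma sharedEdges_finite {V : Type*} {G : SimpleGraph V} {s t : V} {p : ℕ}
    (P : Fin p → G.Walk s t) : (sharedEdges P).Finite :=
  (Set.finite_iUnion fun k => (P k).edges.finite_toSet).subset
    fun _ ⟨i, _, _, hi, _⟩ => Set.mem_iUnion.2 ⟨i, hi⟩

lemma exists_mem_sharedEdges_of_card_lt {V : Type*} {G : SimpleGraph V} {s t : V} {p : ℕ}
    (P : Fin p → G.Walk s t) (C : Finset (Sym2 V)) (hC : C.card < p)
    (hmeet : ∀ k, ∃ e ∈ C, e ∈ (P k).edges) : ∃ e ∈ C, e ∈ sharedEdges P := by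
  choose f hfC hfP using hmeet
  obtain ⟨k, -, l, -, hkl, hf⟩ := Finset.exists_ne_map_eq_of_card_lt_of_maps_to
    (s := Finset.univ) (by simpa using hC) fun k _ => hfC k
  exact ⟨f k, hfC k, k, l, hkl, hfP k, hf ▸ hfP l⟩

lemma Finset.card_le_ncard_of_pairwiseDisjoint {ι α : Type*} {I : Finset ι} {C : ι → Finset α}
    (hC : (I : Set ι).PairwiseDisjoint C) {S : Set α} (hS : S.Finite)
    (hmeet : ∀ k ∈ I, ∃ e ∈ C k, e ∈ S) : I.card ≤ S.ncard := by
  rw [Set.ncard_eq_toFinset_card S hS]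
  refine Finset.card_le_card_of_forall_subsingleton (fun k e => e ∈ C k)
    (fun k hk => ?_) fun e _ k hk l hl => ?_
  · obtain ⟨e, heC, heS⟩ := hmeet k hk
    exact ⟨e, hS.mem_toFinset.2 heS, heC⟩
  · by_contra hne
    exact Finset.disjoint_left.1 (hC hk.1 hl.1 hne) hk.2 hl.2

theorem stmt9_general (n m p : ℕ) (hpn : p ≤ n) (hpm : p ≤ m)
    (s t : ℕ × ℕ)
    (hsp : s.1 + s.2 + 3 ≤ p)
    (htout : ∀ i, s.1 ≤ i → i + s.2 + 3 ≤ p → t.1 > i ∨ t.2 > p - 3 - i) :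
    -- (i) each cutI is a set of exactly `p - 1` edges of the grid graph
    (∀ i, s.1 ≤ i → i + s.2 + 3 ≤ p →
      ↑(cutI p i) ⊆ (gridGraph n m).edgeSet ∧ (cutI p i).card = p - 1) ∧
    -- (ii) every s-t path contains an edge of each cutI
    (∀ i, s.1 ≤ i → i + s.2 + 3 ≤ p →
      ∀ W : (gridGraph n m).Walk s t, W.IsPath → ∃ e ∈ cutI p i, e ∈ W.edges) ∧
    -- (iii) the cuts are pairwise disjoint, and there are `p - 2 - (s.1 + s.2)` of them
    (∀ i j, s.1 ≤ i → i + s.2 + 3 ≤ p → s.1 ≤ j → j + s.2 + 3 ≤ p → i ≠ j →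
      Disjoint (cutI p i) (cutI p j)) ∧
    ((Finset.Icc s.1 (p - 3 - s.2)).card = p - 2 - (s.1 + s.2)) ∧
    -- (iv) every family of `p` s-t paths has at least `p - 2 - (s.1 + s.2)` shared edges
    (∀ P : Fin p → (gridGraph n m).Walk s t, (∀ i, (P i).IsPath) →
      p - 2 - (s.1 + s.2) ≤ (sharedEdges P).ncard) := by
  have hcross : ∀ i, s.1 ≤ i → i + s.2 + 3 ≤ p → ∀ W : (gridGraph n m).Walk s t,
      ∃ e ∈ cutI p i, e ∈ W.edges := fun i hi₁ hi₂ W =>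
    exists_mem_cutI_mem_edges (by omega) W (Prod.le_def.2 ⟨hi₁, by omega⟩)
      fun h => by have := Prod.le_def.1 h; have := htout i hi₁ hi₂; omega
  have hcard : (Finset.Icc s.1 (p - 3 - s.2)).card = p - 2 - (s.1 + s.2) := by
    rw [Nat.card_Icc]; omega
  refine ⟨fun i _ hi => ⟨cutI_subset_edgeSet hpn hpm (by omega), cutI_card (by omega)⟩,
    fun i hi₁ hi₂ W _ => hcross i hi₁ hi₂ W,
    fun i j _ hi _ hj hij => cutI_disjoint (by omega) (by omega) hij, hcard, fun P _ => ?_⟩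
  rw [← hcard]
  refine Finset.card_le_ncard_of_pairwiseDisjoint (C := cutI p)
    (fun i hi j hj hij => cutI_disjoint ?_ ?_ hij) (sharedEdges_finite P) fun k hk => ?_
  · simp only [Finset.coe_Icc, Set.mem_Icc] at hi; omega
  · simp only [Finset.coe_Icc, Set.mem_Icc] at hj; omega
  rw [Finset.mem_Icc] at hk
  exact exists_mem_sharedEdges_of_card_lt P _ (by rw [cutI_card (by omega)]; omega)
    fun l => hcross k hk.1 (by omega) (P l)

theorem stmt9 (n m p : ℕ) (hpn : p ≤ n) (hpm : p ≤ m)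
    (s t : ℕ × ℕ) (hst : s ≠ t)
    (hs : s.1 < n ∧ s.2 < m) (ht : t.1 < n ∧ t.2 < m)
    (hsp : s.1 + s.2 + 3 ≤ p)
    (htout : ∀ i, s.1 ≤ i → i + s.2 + 3 ≤ p → t.1 > i ∨ t.2 > p - 3 - i) :
    -- (i) each cutI is a set of exactly `p - 1` edges of the grid graph
    (∀ i, s.1 ≤ i → i + s.2 + 3 ≤ p →
      ↑(cutI p i) ⊆ (gridGraph n m).edgeSet ∧ (cutI p i).card = p - 1) ∧
    -- (ii) every s-t path contains an edge of each cutI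
    (∀ i, s.1 ≤ i → i + s.2 + 3 ≤ p →
      ∀ W : (gridGraph n m).Walk s t, W.IsPath → ∃ e ∈ cutI p i, e ∈ W.edges) ∧
    -- (iii) the cuts are pairwise disjoint, and there are `p - 2 - (s.1 + s.2)` of them
    (∀ i j, s.1 ≤ i → i + s.2 + 3 ≤ p → s.1 ≤ j → j + s.2 + 3 ≤ p → i ≠ j →
      Disjoint (cutI p i) (cutI p j)) ∧
    ((Finset.Icc s.1 (p - 3 - s.2)).card = p - 2 - (s.1 + s.2)) ∧
    -- (iv) every family of `p` s-t paths has at least `p - 2 - (s.1 + s.2)` shared edges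
    (∀ P : Fin p → (gridGraph n m).Walk s t, (∀ i, (P i).IsPath) →
      p - 2 - (s.1 + s.2) ≤ (sharedEdges P).ncard) :=
  stmt9_general n m p hpn hpm s t hsp htout
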